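/- If two replacement policies P and P' of associativity n induce caches with equal trace semantics for some initial cache content cc_0 whose complement in Blocks is infinite (so fresh blocks always exist), then P and P' have equal policy trace semantics. -/

import Mathlib

structure Mealy (I O S : Type) where
  init : S
  step : S → I → S
  out : S → I → O

def Mealy.run {I O S : Type} (M : Mealy I O S) : S → List (I × O) → Prop
  | _, [] => True
  | s, (i, o) :: t => M.out s i = o ∧ M.run (M.step s i) t

def Mealy.traces {I O S : Type} (M : Mealy I O S) : Set (List (I × O)) :=
  {t | M.run M.init t}

inductive PIn (n : ℕ) where
  | hit (i : Fin n)
  | evct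
deriving DecidableEq

inductive POut (n : ℕ) where
  | none
  | evict (i : Fin n)
deriving DecidableEq

inductive COut where
  | hit
  | miss
deriving DecidableEq

/-- The well-formedness conditions on a replacement policy:
`λ(cs, Evct)` is some `Evict i` and `λ(cs, Hit i) = ⊥`. -/
def ValidPolicy {n : ℕ} {S : Type} (P : Mealy (PIn n) (POut n) S) : Prop :=
  (∀ cs, ∃ i, P.out cs PIn.evct = POut.evict i) ∧
  (∀ cs i, P.out cs (PIn.hit i) = POut.none)

/-- The cache transition relation induced by a replacement policy. -/
inductive CacheStep {n : ℕ} {S B : Type} (P : Mealy (PIn n) (POut n) S) :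
    (Fin n → B) × S → B → COut → (Fin n → B) × S → Prop where
  | hit {cc : Fin n → B} {cs : S} {b : B} (i : Fin n) :
      cc i = b → P.out cs (PIn.hit i) = POut.none →
      CacheStep P (cc, cs) b COut.hit (cc, P.step cs (PIn.hit i))
  | miss {cc : Fin n → B} {cs : S} {b : B} (i : Fin n) :
      (∀ j, cc j ≠ b) → P.out cs PIn.evct = POut.evict i →
      CacheStep P (cc, cs) b COut.miss (Function.update cc i b, P.step cs PIn.evct)

def CacheRun {n : ℕ} {S B : Type} (P : Mealy (PIn n) (POut n) S) :
    (Fin n → B) × S → List (B × COut) → Prop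
  | _, [] => True
  | s, (b, o) :: t => ∃ s', CacheStep P s b o s' ∧ CacheRun P s' t

def CacheTraces {n : ℕ} {S B : Type} (P : Mealy (PIn n) (POut n) S)
    (cc₀ : Fin n → B) : Set (List (B × COut)) :=
  {t | CacheRun P (cc₀, P.init) t}


/-!
Keep the cache contents `cc` injective and replay a policy trace on the cache: `Hit i` becomes an
access to `cc i` (a cache hit) and `Evct` an access to a block `b` outside the cache (a miss, which
exists because `B` is infinite). Along such a replay, two policy states that admit the same cache
traces produce the same outputs: hits output `⊥` by validity, and the line evicted on a miss is
recognised by the cache as the only `i` for which "miss on `b`, then hit on `cc i`" is impossible.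
Since this equivalence of states is preserved by every replayed step, equal cache semantics
propagate along every policy trace.
-/

open Function

theorem Function.Injective.update_of_forall_ne {α β : Type*} [DecidableEq α] {f : α → β}
    (hf : Injective f) (a : α) {b : β} (hb : ∀ x, f x ≠ b) : Injective (update f a b) := by
  intro x y hxy
  by_cases hx : x = a <;> by_cases hy : y = a
  · exact hx.trans hy.symm
  · subst hx
    rw [update_self, update_of_ne hy] at hxy
    exact absurd hxy.symm (hb y)
  · subst hy
    rw [update_self, update_of_ne hx] at hxy
    exact absurd hxy (hb x)
  · rw [update_of_ne hx, update_of_ne hy] at hxy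
    exact hf hxy

section CacheRun

variable {n : ℕ} {S S' B : Type} {P : Mealy (PIn n) (POut n) S} {P' : Mealy (PIn n) (POut n) S'}
  {cc : Fin n → B} {cs : S} {cs' : S'}

theorem cacheRun_cons_hit_iff (hcc : Injective cc) {i : Fin n}
    (hout : P.out cs (PIn.hit i) = POut.none) (t : List (B × COut)) :
    CacheRun P (cc, cs) ((cc i, COut.hit) :: t) ↔ CacheRun P (cc, P.step cs (PIn.hit i)) t := by
  refine ⟨?_, fun h ↦ ⟨_, CacheStep.hit i rfl hout, h⟩⟩
  rintro ⟨s, hstep, hrun⟩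
  cases hstep with
  | hit j hj _ => rwa [hcc hj] at hrun

theorem cacheRun_cons_miss_iff {b : B} (hb : ∀ j, cc j ≠ b) {i : Fin n}
    (hout : P.out cs PIn.evct = POut.evict i) (t : List (B × COut)) :
    CacheRun P (cc, cs) ((b, COut.miss) :: t) ↔
      CacheRun P (update cc i b, P.step cs PIn.evct) t := by
  refine ⟨?_, fun h ↦ ⟨_, CacheStep.miss i hb hout, h⟩⟩
  rintro ⟨s, hstep, hrun⟩
  cases hstep with
  | miss j _ hj =>
    obtain rfl : j = i := POut.evict.inj (hj.symm.trans hout)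
    exact hrun

theorem not_cacheRun_miss_hit_evicted (hcc : Injective cc) {b : B} (hb : ∀ j, cc j ≠ b)
    {i : Fin n} (hout : P.out cs PIn.evct = POut.evict i) :
    ¬ CacheRun P (cc, cs) [(b, COut.miss), (cc i, COut.hit)] := by
  rw [cacheRun_cons_miss_iff hb hout]
  rintro ⟨s, hstep, -⟩
  cases hstep with
  | hit j hj _ =>
    rcases eq_or_ne j i with rfl | hji
    · exact hb j (by rw [update_self] at hj; exact hj.symm)
    · exact hji (hcc (by rwa [update_of_ne hji] at hj))

theorem cacheRun_miss_hit_of_ne_evicted (hP : ValidPolicy P) {b : B} (hb : ∀ j, cc j ≠ b)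
    {i i' : Fin n} (hout : P.out cs PIn.evct = POut.evict i') (hne : i ≠ i') :
    CacheRun P (cc, cs) [(b, COut.miss), (cc i, COut.hit)] := by
  rw [cacheRun_cons_miss_iff hb hout]
  exact ⟨_, CacheStep.hit i (update_of_ne hne ..) (hP.2 _ i), trivial⟩

theorem evict_eq_of_cacheRun_eq (hP' : ValidPolicy P') (hcc : Injective cc) {b : B}
    (hb : ∀ j, cc j ≠ b) {i i' : Fin n} (hout : P.out cs PIn.evct = POut.evict i)
    (hout' : P'.out cs' PIn.evct = POut.evict i')
    (hrun : CacheRun P (cc, cs) = CacheRun P' (cc, cs')) : i = i' := by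
  by_contra hne
  apply not_cacheRun_miss_hit_evicted hcc hb hout
  rw [hrun]
  exact cacheRun_miss_hit_of_ne_evicted hP' hb hout' hne

theorem cacheRun_step_hit_eq (hP : ValidPolicy P) (hP' : ValidPolicy P') (hcc : Injective cc)
    (hrun : CacheRun P (cc, cs) = CacheRun P' (cc, cs')) (i : Fin n) :
    CacheRun P (cc, P.step cs (PIn.hit i)) = CacheRun P' (cc, P'.step cs' (PIn.hit i)) := by
  funext t
  rw [← cacheRun_cons_hit_iff hcc (hP.2 cs i), ← cacheRun_cons_hit_iff hcc (hP'.2 cs' i), hrun]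

theorem exists_cacheRun_step_evct_eq [Infinite B] (hP : ValidPolicy P) (hP' : ValidPolicy P')
    (hcc : Injective cc) (hrun : CacheRun P (cc, cs) = CacheRun P' (cc, cs')) :
    P.out cs PIn.evct = P'.out cs' PIn.evct ∧ ∃ cc' : Fin n → B, Injective cc' ∧
      CacheRun P (cc', P.step cs PIn.evct) = CacheRun P' (cc', P'.step cs' PIn.evct) := by
  obtain ⟨i, hout⟩ := hP.1 cs
  obtain ⟨i', hout'⟩ := hP'.1 cs'
  obtain ⟨b, hb⟩ := (Set.finite_range cc).infinite_compl.nonempty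
  have hb : ∀ j, cc j ≠ b := fun j hj ↦ hb ⟨j, hj⟩
  obtain rfl := evict_eq_of_cacheRun_eq hP' hcc hb hout hout' hrun
  refine ⟨hout.trans hout'.symm, update cc i b, hcc.update_of_forall_ne i hb, ?_⟩
  funext t
  rw [← cacheRun_cons_miss_iff hb hout, ← cacheRun_cons_miss_iff hb hout', hrun]

theorem exists_cacheRun_step_eq [Infinite B] (hP : ValidPolicy P) (hP' : ValidPolicy P')
    (hcc : Injective cc) (hrun : CacheRun P (cc, cs) = CacheRun P' (cc, cs')) (x : PIn n) :
    P.out cs x = P'.out cs' x ∧ ∃ cc' : Fin n → B, Injective cc' ∧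
      CacheRun P (cc', P.step cs x) = CacheRun P' (cc', P'.step cs' x) := by
  cases x with
  | hit i =>
    exact ⟨(hP.2 cs i).trans (hP'.2 cs' i).symm, cc, hcc, cacheRun_step_hit_eq hP hP' hcc hrun i⟩
  | evct => exact exists_cacheRun_step_evct_eq hP hP' hcc hrun

theorem Mealy.run_of_cacheRun_eq [Infinite B] (hP : ValidPolicy P) (hP' : ValidPolicy P')
    (t : List (PIn n × POut n)) (hcc : Injective cc)
    (hrun : CacheRun P (cc, cs) = CacheRun P' (cc, cs')) (ht : P.run cs t) : P'.run cs' t := by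
  induction t generalizing cc cs cs' with
  | nil => trivial
  | cons xo t ih =>
    obtain ⟨hout, ht⟩ := ht
    obtain ⟨hout_eq, cc', hcc', hrun'⟩ := exists_cacheRun_step_eq hP hP' hcc hrun xo.1
    exact ⟨hout_eq ▸ hout, ih hcc' hrun' ht⟩

end CacheRun

theorem cache_semantics_determines_policy_semantics {n : ℕ} {S S' B : Type}
    (P : Mealy (PIn n) (POut n) S) (P' : Mealy (PIn n) (POut n) S')
    (hP : ValidPolicy P) (hP' : ValidPolicy P')
    (cc₀ : Fin n → B) (hcc₀ : Function.Injective cc₀)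
    (hfresh : {b : B | ∀ i, cc₀ i ≠ b}.Infinite)
    (heq : CacheTraces P cc₀ = CacheTraces P' cc₀) :
    P.traces = P'.traces := by
  have : Infinite B := Set.infinite_univ_iff.mp (hfresh.mono (Set.subset_univ _))
  exact Set.Subset.antisymm (fun t ↦ Mealy.run_of_cacheRun_eq hP hP' t hcc₀ heq)
    (fun t ↦ Mealy.run_of_cacheRun_eq hP' hP t hcc₀ heq.symm)
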